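/- arXiv:2410.05120 — 2 statements merged into one kernel-verified Lean document; each statement's English description precedes it below -/
import Mathlib

section
/- Let (A, Tr_A) be an H*-algebra, i.e. a finite dimensional C*-algebra with a faithful trace. Define a trace on the one-object dagger category BA (with End(⋆) = A) by Tr^{BA}_⋆(a) := Tr_A(a). Then (BA, Tr^{BA}) is a pre-2-Hilbert space: BA is a finite unitary category and Tr^{BA} is a unitary trace. -/
/-!
STATEMENT 5: Let `(A, Tr)` be an H*-algebra: a finite dimensional C*-algebra with a
faithful positive trace.  Equip the delooping `BA` (one object `⋆` with `End(⋆) = A`,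
dagger given by `*`) with the trace `Tr^{BA}_⋆ = Tr`.  Then `(BA, Tr^{BA})` is a
pre-2-Hilbert space, i.e.:
* `BA` is a unitary category: each `n`-fold linking algebra, canonically isomorphic to the
  matrix *-algebra `Mₙ(A)` with the *-transpose involution, is a finite dimensional
  C*-algebra;
* `BA` is finite: there is a uniform bound on the dimensions of the centers of all linking
  algebras `Mₙ(A)`;
* `Tr^{BA}` is a unitary trace: it is tracial, and `⟨f|g⟩ = Tr(f† g)` is positive definite
  on the hom space `A`.
-/

/-- Witness that a *-algebra `L` over ℂ is a finite dimensional C*-algebra: a ℂ-linear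
star-algebra isomorphism onto a finite dimensional C*-algebra. -/
structure CStarStructure (L : Type*) [Ring L] [StarRing L] [Algebra ℂ L] where
  carrier : Type*
  [nr : NormedRing carrier]
  [sr : StarRing carrier]
  [cs : CStarRing carrier]
  [na : NormedAlgebra ℂ carrier]
  [sm : StarModule ℂ carrier]
  [fd : FiniteDimensional ℂ carrier]
  equiv : L ≃⋆ₐ[ℂ] carrier

open scoped ComplexConjugate

theorem conj_symm_of_pos {L : Type*} [Ring L] [StarRing L] [Algebra ℂ L] [StarModule ℂ L]
    (τ : L →ₗ[ℂ] ℂ)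
    (h_pos : ∀ a : L, 0 ≤ (τ (star a * a)).re ∧ (τ (star a * a)).im = 0)
    (x y : L) : conj (τ (star y * x)) = τ (star x * y) := by
  set u := τ (star x * y) with hu
  set v := τ (star y * x) with hv
  have h1 : (τ (star (x + y) * (x + y))).im = 0 := (h_pos _).2
  have h2 : (τ (star (x + Complex.I • y) * (x + Complex.I • y))).im = 0 := (h_pos _).2
  have e1 : τ (star (x + y) * (x + y)) = τ (star x * x) + u + (v + τ (star y * y)) := by
    rw [star_add, add_mul, mul_add, mul_add, map_add, map_add, map_add]
  have e2 : τ (star (x + Complex.I • y) * (x + Complex.I • y))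
      = τ (star x * x) + Complex.I * u + (-(Complex.I * v) + τ (star y * y)) := by
    simp only [star_add, star_smul, add_mul, mul_add, smul_mul_assoc, mul_smul_comm,
      map_add, map_smul, smul_eq_mul, Complex.star_def, Complex.conj_I, neg_smul, neg_mul,
      map_neg, mul_neg]
    ring_nf
    rw [Complex.I_sq]
    ring
  rw [e1] at h1
  rw [e2] at h2
  have hx0 := (h_pos x).2
  have hy0 := (h_pos y).2
  simp only [Complex.add_im, Complex.neg_im, Complex.mul_im, Complex.I_re, Complex.I_im,
    hx0, hy0] at h1 h2
  apply Complex.ext <;> simp only [Complex.conj_re, Complex.conj_im] <;> linarith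


section ULiftAux
variable {C : Type*}

instance uliftStarRing [NonUnitalNonAssocSemiring C] [StarRing C] : StarRing (ULift C) where
  star x := ⟨star x.down⟩
  star_involutive x := congrArg ULift.up (star_star x.down)
  star_mul x y := congrArg ULift.up (star_mul x.down y.down)
  star_add x y := congrArg ULift.up (star_add x.down y.down)

instance uliftStarModule [NonUnitalNonAssocSemiring C] [StarRing C] [Module ℂ C]
    [StarModule ℂ C] : StarModule ℂ (ULift C) where
  star_smul r x := congrArg ULift.up (star_smul r x.down)

instance uliftCStarRing [NormedRing C] [StarRing C] [CStarRing C] : CStarRing (ULift C) where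
  norm_mul_self_le x := CStarRing.norm_mul_self_le x.down

/-- The canonical star algebra equivalence between `C` and `ULift C`. -/
def uliftStarAlgEquiv [Ring C] [StarRing C] [Algebra ℂ C] : C ≃⋆ₐ[ℂ] ULift C where
  toFun := ULift.up
  invFun := ULift.down
  left_inv _ := rfl
  right_inv _ := rfl
  map_mul' _ _ := rfl
  map_add' _ _ := rfl
  map_smul' _ _ := rfl
  map_star' _ := rfl

end ULiftAux

/-- Transfer a C*-structure along a star algebra equivalence to a small type. -/
theorem cstar_of_equiv {L : Type*} [Ring L] [StarRing L] [Algebra ℂ L]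
    (C : Type) [NormedRing C] [StarRing C] [CStarRing C] [NormedAlgebra ℂ C]
    [StarModule ℂ C] [FiniteDimensional ℂ C] (e : L ≃⋆ₐ[ℂ] C) :
    Nonempty (CStarStructure L) :=
  ⟨{ carrier := ULift C, equiv := e.trans uliftStarAlgEquiv }⟩

/-- A faithful finite dimensional representation of a complex *-algebra on a f.d. Hilbert
space yields a C*-structure. -/
theorem cstar_of_rep {L : Type*} [Ring L] [StarRing L] [Algebra ℂ L]
    (H : Type) [NormedAddCommGroup H] [InnerProductSpace ℂ H] [FiniteDimensional ℂ H]
    (π : L →⋆ₐ[ℂ] (H →L[ℂ] H)) (hinj : Function.Injective π) :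
    Nonempty (CStarStructure L) := by
  letI : NormedRing ↥π.range := SubringClass.toNormedRing π.range
  letI : CStarRing ↥π.range := StarSubalgebra.to_cstarRing π.range
  letI : NormedAlgebra ℂ ↥π.range := π.range.toNormedAlgebra
  letI : StarModule ℂ ↥π.range := π.range.starModule
  letI : FiniteDimensional ℂ (H →L[ℂ] H) :=
    FiniteDimensional.of_injective
      (ContinuousLinearMap.coeLM ℂ : (H →L[ℂ] H) →ₗ[ℂ] (H →ₗ[ℂ] H))
      (fun f g h => ContinuousLinearMap.coe_injective h)
  letI : FiniteDimensional ℂ ↥π.range := FiniteDimensional.finiteDimensional_submodule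
    (Subalgebra.toSubmodule π.range.toSubalgebra)
  exact cstar_of_equiv ↥π.range (StarAlgEquiv.ofInjective π hinj)

set_option maxHeartbeats 2000000 in
set_option synthInstance.maxHeartbeats 1000000 in
/-- A finite dimensional complex *-algebra with a faithful positive tracial functional
admits a C*-structure, via the left regular (GNS) representation. -/
theorem exists_cstarStructure {L : Type*} [Ring L] [StarRing L] [Algebra ℂ L]
    [StarModule ℂ L] [FiniteDimensional ℂ L]
    (τ : L →ₗ[ℂ] ℂ)
    (h_pos : ∀ a : L, 0 ≤ (τ (star a * a)).re ∧ (τ (star a * a)).im = 0)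
    (h_f : ∀ a : L, τ (star a * a) = 0 → a = 0) :
    Nonempty (CStarStructure L) := by
  classical
  letI instInner : Inner ℂ L := ⟨fun x y => τ (star x * y)⟩
  have inner_def : ∀ x y : L, (inner ℂ x y : ℂ) = τ (star x * y) := fun _ _ => rfl
  letI core : InnerProductSpace.Core ℂ L :=
    { toInner := instInner
      conj_inner_symm := fun x y => conj_symm_of_pos τ h_pos x y
      re_inner_nonneg := fun x => (h_pos x).1
      add_left := fun x y z => by simp only [inner_def, star_add, add_mul, map_add]
      smul_left := fun x y c => by
        simp only [inner_def, star_smul, smul_mul_assoc, map_smul, Complex.star_def,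
          smul_eq_mul]
      definite := h_f }
  letI : NormedAddCommGroup L := core.toNormedAddCommGroup
  letI : InnerProductSpace ℂ L := InnerProductSpace.ofCore core.toCore
  letI : CompleteSpace L := FiniteDimensional.complete ℂ L
  set d : ℕ := Module.finrank ℂ L with hd
  set H : Type := EuclideanSpace ℂ (Fin d) with hH
  let e : L ≃ₗᵢ[ℂ] H := (stdOrthonormalBasis ℂ L).repr
  let E : L ≃L[ℂ] H := e.toContinuousLinearEquiv
  let op : L → (H →L[ℂ] H) := fun a =>
    (E : L →L[ℂ] H).comp ((LinearMap.toContinuousLinearMap (LinearMap.mulLeft ℂ a)).comp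
      (E.symm : H →L[ℂ] L))
  have op_apply : ∀ (a : L) (x : H), op a x = e (a * e.symm x) := fun a x => rfl
  have esymm_e : ∀ x : L, e.symm (e x) = x := fun x => e.symm_apply_apply x
  have op_star : ∀ a : L, op (star a) = star (op a) := by
    intro a
    rw [ContinuousLinearMap.star_eq_adjoint, ContinuousLinearMap.eq_adjoint_iff]
    intro x y
    rw [op_apply, op_apply]
    calc (inner ℂ (e (star a * e.symm x)) y : ℂ)
        = inner ℂ (e (star a * e.symm x)) (e (e.symm y)) := by rw [e.apply_symm_apply]
      _ = inner ℂ (star a * e.symm x) (e.symm y) := e.inner_map_map _ _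
      _ = inner ℂ (e.symm x) (a * e.symm y) := by
          rw [inner_def, inner_def, star_mul, star_star, mul_assoc]
      _ = inner ℂ (e (e.symm x)) (e (a * e.symm y)) := (e.inner_map_map _ _).symm
      _ = inner ℂ x (e (a * e.symm y)) := by rw [e.apply_symm_apply]
  let π : L →⋆ₐ[ℂ] (H →L[ℂ] H) :=
    { toFun := op
      map_one' := by ext x; simp [op_apply, e.apply_symm_apply]
      map_mul' := fun a b => by
        ext x
        simp only [op_apply, ContinuousLinearMap.mul_apply, esymm_e, mul_assoc]
      map_zero' := by ext x; simp [op_apply]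
      map_add' := fun a b => by
        ext x
        simp only [op_apply, ContinuousLinearMap.add_apply, add_mul, map_add]
      commutes' := fun c => by
        ext x
        simp only [op_apply, Algebra.algebraMap_eq_smul_one, smul_mul_assoc, one_mul,
          map_smul, ContinuousLinearMap.smul_apply, ContinuousLinearMap.one_apply]
        rw [e.apply_symm_apply]
      map_star' := fun a => op_star a }
  have hinj : Function.Injective π := by
    intro a b hab
    have h1 : e (a * e.symm (e 1)) = e (b * e.symm (e 1)) :=
      congrArg (fun f : H →L[ℂ] H => f (e 1)) hab
    rw [esymm_e, mul_one, mul_one] at h1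
    exact e.injective h1
  exact cstar_of_rep H π hinj

section MatrixAux

open Matrix

theorem matrix_center_apply {A : Type*} [Ring A] {n : ℕ}
    (c : Matrix (Fin (n + 1)) (Fin (n + 1)) A)
    (hc : ∀ b, b * c = c * b) (i j : Fin (n + 1)) :
    c i j = if i = j then c 0 0 else 0 := by
  have h0 : ((Matrix.single j 0 (1 : A) * c : Matrix (Fin (n + 1)) (Fin (n + 1)) A)) i 0
      = ((c * Matrix.single j 0 (1 : A) : Matrix (Fin (n + 1)) (Fin (n + 1)) A)) i 0 := by
    rw [hc]
  rw [Matrix.mul_single_apply_same] at h0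
  by_cases hij : i = j
  · subst hij
    rw [Matrix.single_mul_apply_same] at h0
    simp only [one_mul, mul_one] at h0
    simp [h0.symm]
  · rw [Matrix.single_mul_apply_of_ne (h := hij)] at h0
    simp only [mul_one] at h0
    simp [hij, h0.symm]

theorem center_finrank_le {A : Type*} [Ring A] [Algebra ℂ A] [FiniteDimensional ℂ A] (n : ℕ) :
    Module.finrank ℂ (Subalgebra.center ℂ (Matrix (Fin n) (Fin n) A))
      ≤ Module.finrank ℂ A := by
  cases n with
  | zero =>
      haveI : Subsingleton (Matrix (Fin 0) (Fin 0) A) :=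
        ⟨fun M N => by ext i j; exact absurd i.2 (by omega)⟩
      haveI : Subsingleton (Subalgebra.center ℂ (Matrix (Fin 0) (Fin 0) A)) :=
        ⟨fun x y => Subtype.ext (Subsingleton.elim _ _)⟩
      rw [Module.finrank_zero_of_subsingleton]
      exact Nat.zero_le _
  | succ m =>
      let f : Subalgebra.center ℂ (Matrix (Fin (m + 1)) (Fin (m + 1)) A) →ₗ[ℂ] A :=
        { toFun := fun c => (c : Matrix (Fin (m + 1)) (Fin (m + 1)) A) 0 0
          map_add' := fun c d => rfl
          map_smul' := fun r c => rfl }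
      have hf : Function.Injective f := by
        intro c d h
        apply Subtype.ext
        ext i j
        rw [matrix_center_apply _ (Subalgebra.mem_center_iff.mp c.2) i j,
          matrix_center_apply _ (Subalgebra.mem_center_iff.mp d.2) i j]
        have h' : (c : Matrix (Fin (m + 1)) (Fin (m + 1)) A) 0 0
            = (d : Matrix (Fin (m + 1)) (Fin (m + 1)) A) 0 0 := h
        rw [h']
      exact LinearMap.finrank_le_finrank_of_injective hf

end MatrixAux

theorem stmt_5 (A : Type*) [NormedRing A] [StarRing A] [CStarRing A]
    [NormedAlgebra ℂ A] [StarModule ℂ A] [FiniteDimensional ℂ A]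
    (Tr : A →ₗ[ℂ] ℂ)
    (h_tracial : ∀ a b : A, Tr (a * b) = Tr (b * a))
    (h_pos : ∀ a : A, 0 ≤ (Tr (star a * a)).re ∧ (Tr (star a * a)).im = 0)
    (h_faithful : ∀ a : A, Tr (star a * a) = 0 → a = 0) :
    -- `BA` is a unitary category: every linking algebra `Mₙ(A)` is a f.d. C*-algebra
    (∀ n : ℕ, Nonempty (CStarStructure (Matrix (Fin n) (Fin n) A))) ∧
    -- `BA` is finite: a uniform bound on the dimensions of the centers of linking algebras
    (∃ K : ℕ, ∀ n : ℕ,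
      Module.finrank ℂ (Subalgebra.center ℂ (Matrix (Fin n) (Fin n) A)) < K) ∧
    -- `Tr^{BA}` is a unitary trace on `BA`
    ((∀ f g : A, Tr (f * g) = Tr (g * f)) ∧
      (∀ f : A, ((Tr (star f * f)).im = 0 ∧ 0 ≤ (Tr (star f * f)).re) ∧
        (f ≠ 0 → Tr (star f * f) ≠ 0))) := by
  refine ⟨?_, ⟨Module.finrank ℂ A + 1, fun n =>
      Nat.lt_succ_of_le (center_finrank_le n)⟩, h_tracial, fun f =>
      ⟨⟨(h_pos f).2, (h_pos f).1⟩, fun hf h0 => hf (h_faithful f h0)⟩⟩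
  intro n
  set τ : Matrix (Fin n) (Fin n) A →ₗ[ℂ] ℂ :=
    Tr ∘ₗ (Matrix.traceLinearMap (Fin n) ℂ A) with hτ
  have key : ∀ M : Matrix (Fin n) (Fin n) A,
      τ (star M * M) = ∑ i, ∑ j, Tr (star (M j i) * M j i) := by
    intro M
    simp only [hτ, LinearMap.comp_apply, Matrix.traceLinearMap_apply, Matrix.trace,
      Matrix.diag_apply, map_sum, Matrix.mul_apply, Matrix.star_apply]
  have him : ∀ M : Matrix (Fin n) (Fin n) A, (τ (star M * M)).im = 0 := by
    intro M
    rw [key]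
    rw [Complex.im_sum]
    refine Finset.sum_eq_zero fun i _ => ?_
    rw [Complex.im_sum]
    exact Finset.sum_eq_zero fun j _ => (h_pos _).2
  have hre : ∀ M : Matrix (Fin n) (Fin n) A, (τ (star M * M)).re
      = ∑ i, ∑ j, (Tr (star (M j i) * M j i)).re := by
    intro M
    rw [key, Complex.re_sum]
    exact Finset.sum_congr rfl fun i _ => Complex.re_sum _ _
  refine exists_cstarStructure τ (fun M => ⟨?_, him M⟩) ?_
  · rw [hre]
    exact Finset.sum_nonneg fun i _ => Finset.sum_nonneg fun j _ => (h_pos _).1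
  · intro M hM
    have h0 : ∑ i, ∑ j, (Tr (star (M j i) * M j i)).re = 0 := by
      rw [← hre, hM, Complex.zero_re]
    have hterm : ∀ i j : Fin n, (Tr (star (M j i) * M j i)).re = 0 := by
      have h1 := (Finset.sum_eq_zero_iff_of_nonneg
        (fun i _ => Finset.sum_nonneg fun j _ => (h_pos (M j i)).1)).mp h0
      intro i j
      have h2 := (Finset.sum_eq_zero_iff_of_nonneg
        (fun j _ => (h_pos (M j i)).1)).mp (h1 i (Finset.mem_univ i))
      exact h2 j (Finset.mem_univ j)
    ext i j
    have : Tr (star (M i j) * M i j) = 0 :=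
      Complex.ext (hterm j i) ((h_pos (M i j)).2)
    simpa using h_faithful _ this
end

section
/- Let (C, Tr^C) be a 2-Hilbert space (a Cauchy complete pre-2-Hilbert space) and (D, Tr^D) a pre-2-Hilbert space. Define on the dagger functor category Fun†(C → D) the trace Tr_F(ρ : F ⇒ F) := Σ_{s ∈ Irr(C)} d_s · Tr^D_{F(s)}(ρ_s), where d_s = Tr^C_s(id_s). Then Tr is a unitary trace: for natural transformations ρ : F ⇒ G and σ : G ⇒ F one has Tr_F(σ ∘ ρ) = Tr_G(ρ ∘ σ), and ⟨ρ|τ⟩ := Tr_F(ρ† ∘ τ) is positive definite on Nat(F, G). -/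
/-!
STATEMENT 6: Let `(C, TrC)` be a 2-Hilbert space (a finite semisimple C*-category with
unitary trace; we record the dagger structure, the trace axioms, a finite set `S` of
representatives `ι s` of the simple objects with `End(ι s) = ℂ·𝟙`, pairwise orthogonal,
and the semisimplicity consequence that a natural transformation vanishing on all simples
vanishes), and let `(D, TrD)` be a pre-2-Hilbert space.  For dagger functors
`F, G : C ⥤ D` define on `Fun†(C → D)` the trace
`Tr_F(ρ) := ∑_{s ∈ Irr C} d_s · TrD_{F s}(ρ_s)`, with `d_s = TrC_s(𝟙)`.
Then this is a unitary trace: for `ρ : F ⟶ G` and `σ : G ⟶ F`,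
`Tr_F(σ ∘ ρ) = Tr_G(ρ ∘ σ)`, and `⟨ρ|τ⟩ := Tr_F(ρ† ∘ τ)` is positive definite on
`Nat(F, G)` (where `(ρ†)_a = (ρ_a)†`).
-/

open CategoryTheory

theorem stmt_6 {C D : Type*} [Category C] [Category D]
    [Preadditive C] [Linear ℂ C] [Preadditive D] [Linear ℂ D]
    (dagC : ∀ {X Y : C}, (X ⟶ Y) → (Y ⟶ X))
    (dagC_id : ∀ X : C, dagC (𝟙 X) = 𝟙 X)
    (dagC_comp : ∀ {X Y Z : C} (f : X ⟶ Y) (g : Y ⟶ Z), dagC (f ≫ g) = dagC g ≫ dagC f)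
    (dagC_dag : ∀ {X Y : C} (f : X ⟶ Y), dagC (dagC f) = f)
    (dagD : ∀ {X Y : D}, (X ⟶ Y) → (Y ⟶ X))
    (dagD_id : ∀ X : D, dagD (𝟙 X) = 𝟙 X)
    (dagD_comp : ∀ {X Y Z : D} (f : X ⟶ Y) (g : Y ⟶ Z), dagD (f ≫ g) = dagD g ≫ dagD f)
    (dagD_dag : ∀ {X Y : D} (f : X ⟶ Y), dagD (dagD f) = f)
    (TrC : ∀ c : C, (c ⟶ c) → ℂ)
    (TrC_tracial : ∀ {c d : C} (f : c ⟶ d) (g : d ⟶ c), TrC c (f ≫ g) = TrC d (g ≫ f))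
    (TrC_posdef : ∀ {c d : C} (f : c ⟶ d),
      ((TrC c (f ≫ dagC f)).im = 0 ∧ 0 ≤ (TrC c (f ≫ dagC f)).re) ∧
        (f ≠ 0 → TrC c (f ≫ dagC f) ≠ 0))
    (TrD : ∀ d : D, (d ⟶ d) → ℂ)
    (TrD_tracial : ∀ {c d : D} (f : c ⟶ d) (g : d ⟶ c), TrD c (f ≫ g) = TrD d (g ≫ f))
    (TrD_posdef : ∀ {c d : D} (f : c ⟶ d),
      ((TrD c (f ≫ dagD f)).im = 0 ∧ 0 ≤ (TrD c (f ≫ dagD f)).re) ∧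
        (f ≠ 0 → TrD c (f ≫ dagD f) ≠ 0))
    -- `S` is a set of representatives of the simple objects of the semisimple category `C`
    (S : Type) [Fintype S] (ι : S → C)
    (h_simple : ∀ (s : S) (f : ι s ⟶ ι s), ∃ z : ℂ, f = z • 𝟙 (ι s))
    (h_orth : ∀ s t : S, s ≠ t → ∀ f : ι s ⟶ ι t, f = 0)
    (h_ne : ∀ s : S, (𝟙 (ι s) : ι s ⟶ ι s) ≠ 0)
    -- dagger functors `F, G`
    (F G : C ⥤ D)
    (hF : ∀ {X Y : C} (f : X ⟶ Y), F.map (dagC f) = dagD (F.map f))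
    (hG : ∀ {X Y : C} (f : X ⟶ Y), G.map (dagC f) = dagD (G.map f))
    -- semisimplicity: a natural transformation vanishing on all simples vanishes
    (h_components : ∀ ρ : F ⟶ G, (∀ s : S, ρ.app (ι s) = 0) → ρ = 0) :
    -- traciality of the functor-category trace
    (∀ (ρ : F ⟶ G) (σ : G ⟶ F),
      ∑ s : S, TrC (ι s) (𝟙 (ι s)) * TrD (F.obj (ι s)) (ρ.app (ι s) ≫ σ.app (ι s))
        = ∑ s : S, TrC (ι s) (𝟙 (ι s)) * TrD (G.obj (ι s)) (σ.app (ι s) ≫ ρ.app (ι s))) ∧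
    -- positive definiteness of `⟨ρ|τ⟩ = Tr_F(ρ† ∘ τ)` on `Nat(F,G)`
    (∀ ρ : F ⟶ G,
      ((∑ s : S, TrC (ι s) (𝟙 (ι s)) *
          TrD (F.obj (ι s)) (ρ.app (ι s) ≫ dagD (ρ.app (ι s)))).im = 0 ∧
        0 ≤ (∑ s : S, TrC (ι s) (𝟙 (ι s)) *
          TrD (F.obj (ι s)) (ρ.app (ι s) ≫ dagD (ρ.app (ι s)))).re) ∧
      (ρ ≠ 0 → 0 < (∑ s : S, TrC (ι s) (𝟙 (ι s)) *
          TrD (F.obj (ι s)) (ρ.app (ι s) ≫ dagD (ρ.app (ι s)))).re)) := by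
  have hd : ∀ s : S, (TrC (ι s) (𝟙 (ι s))).im = 0 ∧ 0 < (TrC (ι s) (𝟙 (ι s))).re := by
    intro s
    have h := TrC_posdef (𝟙 (ι s))
    rw [dagC_id, Category.comp_id] at h
    refine ⟨h.1.1, lt_of_le_of_ne h.1.2 ?_⟩
    intro hre
    exact h.2 (h_ne s) (Complex.ext (by simpa using hre.symm) (by simpa using h.1.1))
  constructor
  · intro ρ σ
    refine Finset.sum_congr rfl fun s _ => ?_
    congr 1
    exact TrD_tracial _ _
  · intro ρ
    have hterm : ∀ s : S,
        (TrC (ι s) (𝟙 (ι s)) *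
          TrD (F.obj (ι s)) (ρ.app (ι s) ≫ dagD (ρ.app (ι s)))).im = 0 ∧
        0 ≤ (TrC (ι s) (𝟙 (ι s)) *
          TrD (F.obj (ι s)) (ρ.app (ι s) ≫ dagD (ρ.app (ι s)))).re := by
      intro s
      obtain ⟨hdim, hdre⟩ := hd s
      obtain ⟨⟨him, hre⟩, -⟩ := TrD_posdef (ρ.app (ι s))
      constructor
      · simp [Complex.mul_im, hdim, him]
      · simp only [Complex.mul_re, hdim, him, mul_zero, zero_mul, sub_zero]
        exact mul_nonneg hdre.le hre
    have him0 : (∑ s : S, TrC (ι s) (𝟙 (ι s)) *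
        TrD (F.obj (ι s)) (ρ.app (ι s) ≫ dagD (ρ.app (ι s)))).im = 0 := by
      rw [Complex.im_sum]
      exact Finset.sum_eq_zero fun s _ => (hterm s).1
    refine ⟨⟨him0, ?_⟩, ?_⟩
    · rw [Complex.re_sum]
      exact Finset.sum_nonneg fun s _ => (hterm s).2
    · intro hρ
      have : ∃ s : S, ρ.app (ι s) ≠ 0 := by
        by_contra h
        push_neg at h
        exact hρ (h_components ρ h)
      obtain ⟨s, hs⟩ := this
      have hpos : 0 < (TrC (ι s) (𝟙 (ι s)) *
          TrD (F.obj (ι s)) (ρ.app (ι s) ≫ dagD (ρ.app (ι s)))).re := by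
        obtain ⟨hdim, hdre⟩ := hd s
        obtain ⟨⟨him, hre⟩, hne⟩ := TrD_posdef (ρ.app (ι s))
        have htre : 0 < (TrD (F.obj (ι s)) (ρ.app (ι s) ≫ dagD (ρ.app (ι s)))).re := by
          refine lt_of_le_of_ne hre ?_
          intro h0
          exact hne hs (Complex.ext (by simpa using h0.symm) (by simpa using him))
        simp only [Complex.mul_re, hdim, him, mul_zero, zero_mul, sub_zero]
        exact mul_pos hdre htre
      rw [Complex.re_sum]
      exact Finset.sum_pos' (fun i _ => (hterm i).2) ⟨s, Finset.mem_univ s, hpos⟩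
end
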